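/- arXiv:2510.08717 — 3 statements merged into one kernel-verified Lean document; each statement's English description precedes it below -/
import Mathlib

section
/- Let ξ be a real random variable with Var[ξ] ≥ θ > 0 and E|ξ|⁴ < ∞. Then 1 − Q(ξ, √(2θ)) ≥ 2^{-6} (Var[ξ])² / E|ξ − Eξ|⁴, where Q(ξ,λ) = sup_{v∈ℝ} P(v ≤ ξ ≤ v + λ) is the Lévy concentration function. -/
open MeasureTheory ProbabilityTheory

lemma integrable_pow4 {O : Type*} [MeasurableSpace O] {m : Measure O} {f : O → ℝ}
    (h : MemLp f 4 m) : Integrable (fun w => f w ^ 4) m := by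
  have h' := h.integrable_norm_rpow (by norm_num) (by norm_num)
  refine h'.congr (Filter.Eventually.of_forall fun x => ?_)
  simp only [ENNReal.toReal_ofNat]
  rw [show ((4:ℝ)) = ((4:ℕ):ℝ) by norm_num, Real.rpow_natCast]
  simp [Real.norm_eq_abs, pow_abs, abs_of_nonneg (by positivity : (0:ℝ) ≤ f x ^ 4)]

lemma sq_setIntegral_le {O : Type*} [MeasurableSpace O] {m : Measure O} [IsFiniteMeasure m]
    {g : O → ℝ} (hg : ∀ x, 0 ≤ g x) (hgm : Measurable g)
    (hg2 : Integrable (fun x => g x ^ 2) m) {B : Set O} (hB : MeasurableSet B) :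
    (∫ x in B, g x ∂m) ^ 2 ≤ (∫ x, g x ^ 2 ∂m) * (m B).toReal := by
  have hgL2 : MemLp g 2 m :=
    (memLp_two_iff_integrable_sq hgm.aestronglyMeasurable).2 hg2
  have hI : MemLp (B.indicator (fun _ => (1:ℝ))) 2 m := (memLp_const 1).indicator hB
  have hconj : Real.HolderConjugate 2 2 := ⟨by norm_num, by norm_num, by norm_num⟩
  have key := integral_mul_le_Lp_mul_Lq_of_nonneg hconj (Filter.Eventually.of_forall hg)
      (Filter.Eventually.of_forall fun x => Set.indicator_nonneg (fun _ _ => zero_le_one) x)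
      (by simpa using hgL2) (by simpa using hI)
  have hL : ∫ x, g x * B.indicator (fun _ => (1:ℝ)) x ∂m = ∫ x in B, g x ∂m := by
    rw [← integral_indicator hB]
    congr 1 with x
    by_cases hx : x ∈ B <;> simp [Set.indicator_of_mem, Set.indicator_of_notMem, hx]
  have hg2' : ∫ x, g x ^ (2:ℝ) ∂m = ∫ x, g x ^ 2 ∂m := by
    congr 1 with x
    rw [show ((2:ℝ)) = ((2:ℕ):ℝ) by norm_num, Real.rpow_natCast]
  have hi2 : ∫ x, B.indicator (fun _ => (1:ℝ)) x ^ (2:ℝ) ∂m = (m B).toReal := by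
    have hpt : ∀ x, B.indicator (fun _ => (1:ℝ)) x ^ (2:ℝ) = B.indicator (fun _ => (1:ℝ)) x := by
      intro x
      by_cases hx : x ∈ B <;>
        simp [Set.indicator_of_mem, Set.indicator_of_notMem, hx, Real.zero_rpow, Real.one_rpow]
    simp_rw [hpt]
    rw [integral_indicator_const (1:ℝ) hB]
    simp [Measure.real]
  rw [hL, hg2', hi2] at key
  have hX : (0:ℝ) ≤ ∫ x, g x ^ 2 ∂m := integral_nonneg fun x => sq_nonneg _
  have hY : (0:ℝ) ≤ (m B).toReal := ENNReal.toReal_nonneg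
  calc (∫ x in B, g x ∂m) ^ 2
      ≤ ((∫ x, g x ^ 2 ∂m) ^ (1/2:ℝ) * ((m B).toReal) ^ (1/2:ℝ)) ^ 2 := by
        apply pow_le_pow_left₀ (setIntegral_nonneg hB fun x _ => hg x) key
    _ = (∫ x, g x ^ 2 ∂m) * (m B).toReal := by
        rw [mul_pow, ← Real.rpow_natCast (_ ^ (1/2:ℝ)) 2, ← Real.rpow_natCast (_ ^ (1/2:ℝ)) 2,
          ← Real.rpow_mul hX, ← Real.rpow_mul hY]
        norm_num

/-- The Lévy concentration function `Q(ξ, λ) = sup_{v ∈ ℝ} P(v ≤ ξ ≤ v + λ)`. -/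
noncomputable def levyConc {Ω : Type*} [MeasurableSpace Ω] (μ : Measure Ω)
    (ξ : Ω → ℝ) (l : ℝ) : ℝ :=
  ⨆ v : ℝ, (μ {ω | v ≤ ξ ω ∧ ξ ω ≤ v + l}).toReal

set_option maxHeartbeats 1000000 in
/-- If `Var[ξ] ≥ θ > 0` and `E|ξ|⁴ < ∞`, then
`1 − Q(ξ, √(2θ)) ≥ 2⁻⁶ (Var[ξ])² / E|ξ − Eξ|⁴`. -/
theorem anticoncentration_of_variance
    {Ω : Type*} [MeasurableSpace Ω] (μ : Measure Ω) [IsProbabilityMeasure μ]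
    (ξ : Ω → ℝ) (hmeas : Measurable ξ) (h4 : MemLp ξ 4 μ)
    (θ : ℝ) (hθ : 0 < θ) (hvar : θ ≤ variance ξ μ) :
    (2 : ℝ) ^ (-6 : ℤ) * (variance ξ μ) ^ 2 / (∫ ω, |ξ ω - ∫ x, ξ x ∂μ| ^ 4 ∂μ)
      ≤ 1 - levyConc μ ξ (Real.sqrt (2 * θ)) := by
  set m := ∫ x, ξ x ∂μ with hm
  set V := variance ξ μ with hVdef
  set M := ∫ ω, |ξ ω - m| ^ 4 ∂μ with hMdef
  set K := (2:ℝ)^(-6:ℤ) * V^2 / M with hK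
  clear_value K
  have h2 : MemLp ξ 2 μ := h4.mono_exponent (by norm_num)
  have h1 : Integrable ξ μ := h2.integrable one_le_two
  have hη4 : MemLp (fun ω => ξ ω - m) 4 μ := h4.sub (memLp_const m)
  have hη2 : MemLp (fun ω => ξ ω - m) 2 μ := hη4.mono_exponent (by norm_num)
  have hIη : Integrable (fun ω => ξ ω - m) μ := h1.sub (integrable_const m)
  have hIη2 : Integrable (fun ω => (ξ ω - m)^2) μ := by simpa using hη2.integrable_sq
  have hIη4 : Integrable (fun ω => (ξ ω - m)^4) μ := integrable_pow4 hη4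
  have hMeq : M = ∫ ω, (ξ ω - m)^4 ∂μ := by
    rw [hMdef]
    refine integral_congr_ae (Filter.Eventually.of_forall fun ω => ?_)
    show |ξ ω - m| ^ 4 = (ξ ω - m)^4
    rw [pow_abs, abs_of_nonneg (by positivity)]
  have hVeq : V = ∫ ω, (ξ ω - m)^2 ∂μ := by
    rw [hVdef, variance_eq_integral hmeas.aemeasurable, ← hm]
  have hEη : ∫ ω, (ξ ω - m) ∂μ = 0 := by
    rw [integral_sub h1 (integrable_const m), integral_const]
    simp [← hm]
  clear_value m V M
  have hV0 : 0 < V := lt_of_lt_of_le hθ hvar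
  have hMV : V^2 ≤ M := by
    have hg2 : Integrable (fun x => ((ξ x - m)^2)^2) μ := by
      have hfe : (fun x => ((ξ x - m)^2)^2) = fun x => (ξ x - m)^4 := by funext x; ring
      rw [hfe]; exact hIη4
    have h := sq_setIntegral_le (g := fun ω => (ξ ω - m)^2)
        (fun ω => sq_nonneg _) ((hmeas.sub measurable_const).pow_const 2) hg2 MeasurableSet.univ
    rw [Measure.restrict_univ] at h
    simp only [measure_univ, ENNReal.toReal_one, mul_one] at h
    calc V^2 = (∫ ω, (ξ ω - m)^2 ∂μ)^2 := by rw [hVeq]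
      _ ≤ ∫ x, ((ξ x - m)^2)^2 ∂μ := h
      _ = M := by
          rw [hMeq]
          exact integral_congr_ae (Filter.Eventually.of_forall fun ω => by ring)
  have hM0 : 0 < M := lt_of_lt_of_le (by positivity) hMV
  have hQ : levyConc μ ξ (Real.sqrt (2*θ)) ≤ 1 - K := by
    rw [levyConc]
    apply ciSup_le
    intro v
    set l := Real.sqrt (2*θ) with hl
    have hl2 : l^2 = 2*θ := by rw [hl]; exact Real.sq_sqrt (by linarith)
    set c := v + l/2 with hc
    set e := m - c with he
    set A := {ω | v ≤ ξ ω ∧ ξ ω ≤ v + l} with hA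
    have hAm : MeasurableSet A := hmeas measurableSet_Icc
    obtain ⟨g, hgdef⟩ : ∃ f : Ω → ℝ, f = fun ω => (ξ ω - c)^2 := ⟨_, rfl⟩
    clear_value l c e A
    have hgm : Measurable g := by
      rw [hgdef]; exact (hmeas.sub measurable_const).pow_const 2
    have hgc2 : MemLp (fun ω => ξ ω - c) 2 μ := h2.sub (memLp_const c)
    have hgc4 : MemLp (fun ω => ξ ω - c) 4 μ := h4.sub (memLp_const c)
    have hIg : Integrable g μ := by rw [hgdef]; simpa using hgc2.integrable_sq
    have hIg2 : Integrable (fun ω => g ω ^ 2) μ := by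
      have h4' := integrable_pow4 hgc4
      exact h4'.congr (Filter.Eventually.of_forall fun x => by rw [hgdef]; ring)
    have hIa : Integrable (fun ω => (ξ ω - m)^2 + 2*e*(ξ ω - m)) μ :=
      hIη2.add (hIη.const_mul (2*e))
    have hgint : ∫ ω, g ω ∂μ = V + e^2 := by
      have hpt : ∀ ω, g ω = ((ξ ω - m)^2 + 2*e*(ξ ω - m)) + e^2 := by
        intro ω; rw [hgdef]; simp only [he]; ring
      rw [integral_congr_ae (Filter.Eventually.of_forall hpt),
        integral_add hIa (integrable_const _),
        integral_add hIη2 (hIη.const_mul (2*e)), integral_const_mul, hEη,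
        ← hVeq, integral_const]
      simp [measure_univ]
    have hAbound : ∫ ω in A, g ω ∂μ ≤ θ/2 := by
      have hpt : ∀ ω ∈ A, g ω ≤ θ/2 := by
        intro ω hω
        rw [hA] at hω
        obtain ⟨ha, hb⟩ := hω
        rw [hgdef]
        simp only [hc]
        nlinarith [hl2]
      calc ∫ ω in A, g ω ∂μ ≤ ∫ _ω in A, θ/2 ∂μ :=
            setIntegral_mono_on hIg.integrableOn
              (integrableOn_const (measure_lt_top μ A).ne) hAm hpt
        _ = (μ A).toReal * (θ/2) := by rw [setIntegral_const]; rfl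
        _ ≤ 1 * (θ/2) := by
            apply mul_le_mul_of_nonneg_right _ (by linarith)
            have h1' : μ A ≤ 1 := prob_le_one
            have := ENNReal.toReal_mono ENNReal.one_ne_top h1'
            simpa using this
        _ = θ/2 := one_mul _
    have hsplit : ∫ ω in A, g ω ∂μ + ∫ ω in Aᶜ, g ω ∂μ = ∫ ω, g ω ∂μ :=
      integral_add_compl hAm hIg
    have hBlow : V/2 + e^2 ≤ ∫ ω in Aᶜ, g ω ∂μ := by
      have heq : ∫ ω in Aᶜ, g ω ∂μ = (V + e^2) - ∫ ω in A, g ω ∂μ := by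
        rw [← hgint, ← hsplit]; ring
      rw [heq]
      have hth : θ ≤ V := hvar
      linarith
    have hgnn : ∀ x, 0 ≤ g x := fun x => by rw [hgdef]; positivity
    have hCS := sq_setIntegral_le hgnn hgm hIg2 hAm.compl
    have hT : ∫ ω, g ω ^ 2 ∂μ ≤ 8*(M + e^4) := by
      have hpt : ∀ ω, g ω ^ 2 ≤ 8*((ξ ω - m)^4 + e^4) := by
        intro ω
        have hgw : g ω ^ 2 = ((ξ ω - m) + e)^4 := by rw [hgdef]; simp only [he]; ring
        rw [hgw]
        nlinarith [sq_nonneg ((ξ ω - m) - e), sq_nonneg ((ξ ω - m) + e),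
          sq_nonneg ((ξ ω - m)^2 - e^2), sq_nonneg ((ξ ω - m)^2 + e^2),
          sq_nonneg ((ξ ω - m) * e)]
      calc ∫ ω, g ω ^ 2 ∂μ ≤ ∫ ω, 8*((ξ ω - m)^4 + e^4) ∂μ :=
            integral_mono hIg2 ((hIη4.add (integrable_const _)).const_mul 8) hpt
        _ = 8*(M + e^4) := by
            rw [integral_const_mul, integral_add hIη4 (integrable_const _), integral_const,
              ← hMeq]
            simp [measure_univ]
    set P := (μ Aᶜ).toReal with hP
    clear_value P
    have hP0 : 0 ≤ P := by rw [hP]; exact ENNReal.toReal_nonneg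
    have hCS' : (V/2 + e^2)^2 ≤ 8*(M + e^4) * P := by
      calc (V/2 + e^2)^2 ≤ (∫ ω in Aᶜ, g ω ∂μ)^2 := by
            apply pow_le_pow_left₀ (by positivity) hBlow
        _ ≤ (∫ ω, g ω ^ 2 ∂μ) * P := hCS
        _ ≤ 8*(M + e^4) * P := mul_le_mul_of_nonneg_right hT hP0
    have hKP : K ≤ P := by
      rw [hK, show (2:ℝ)^(-6:ℤ) = 1/64 by norm_num, div_le_iff₀ hM0]
      have key1 : V^2 * (M + e^4) ≤ 8*M*(V/2 + e^2)^2 := by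
        nlinarith [mul_nonneg (sub_nonneg.2 hMV) (sq_nonneg (e^2)),
          mul_nonneg (mul_nonneg hM0.le hV0.le) (sq_nonneg e),
          mul_nonneg hM0.le (sq_nonneg V),
          mul_nonneg hM0.le (sq_nonneg (e^2))]
      have key2 : M*(V/2 + e^2)^2 ≤ M*(8*(M + e^4)*P) :=
        mul_le_mul_of_nonneg_left hCS' hM0.le
      have hMe : (0:ℝ) < M + e^4 := by positivity
      have h64 : V^2 * (M + e^4) ≤ 64*(P*M) * (M + e^4) := by
        calc V^2 * (M + e^4) ≤ 8*M*(V/2 + e^2)^2 := key1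
          _ ≤ 8*(M*(8*(M + e^4)*P)) := by linarith [key2]
          _ = 64*(P*M) * (M + e^4) := by ring
      have hfin : V^2 ≤ 64*(P*M) := le_of_mul_le_mul_right h64 hMe
      linarith
    have hcompl : P = 1 - (μ A).toReal := by
      rw [hP, measure_compl hAm (measure_ne_top μ A), measure_univ,
        ENNReal.toReal_sub_of_le prob_le_one ENNReal.one_ne_top]
      simp
    rw [hcompl] at hKP
    linarith
  linarith
end

section
/- Let {X_n} be independent real random variables such that there exists ε > 0 with Σ_{n=0}^∞ (1 − Q(X_n, ε)) = ∞. Then there is no deterministic sequence (c_n) of reals such that Σ_{n=0}^∞ |X_n − c_n| < ∞ almost surely. -/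
open MeasureTheory ProbabilityTheory Filter

/-- If `{X_n}` are independent and `∑ (1 − Q(X_n, ε)) = ∞` for some `ε > 0`, then there is
no deterministic sequence `(c_n)` with `∑ |X_n − c_n| < ∞` almost surely. -/
theorem no_deterministic_recentering
    {Ω : Type*} [MeasurableSpace Ω] (μ : Measure Ω) [IsProbabilityMeasure μ]
    (X : ℕ → Ω → ℝ) (hmeas : ∀ n, Measurable (X n))
    (hindep : iIndepFun X μ)
    (ε : ℝ) (hε : 0 < ε)
    (hdiv : ¬ Summable (fun n => 1 - levyConc μ (X n) ε)) :
    ¬ ∃ c : ℕ → ℝ, ∀ᵐ ω ∂μ, Summable (fun n => |X n ω - c n|) := by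
  rintro ⟨c, hc⟩
  set A : ℕ → Set Ω := fun n => X n ⁻¹' {x | ε / 2 < |x - c n|} with hA_def
  have hSmeas : ∀ n, MeasurableSet {x : ℝ | ε / 2 < |x - c n|} := fun n => by
    have : Measurable fun x : ℝ => |x - c n| :=
      (continuous_abs.comp (continuous_id.sub continuous_const)).measurable
    exact measurableSet_lt measurable_const this
  have hA : ∀ n, MeasurableSet (A n) := fun n => (hSmeas n).preimage (hmeas n)
  -- independence of the sets A n
  have hiA : iIndepSet A μ := by
    rw [iIndepSet_iff_meas_biInter hA]
    intro s
    exact hindep.meas_biInter (fun i _ => ⟨_, hSmeas i, rfl⟩)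
  -- ∑ μ (A n) < ∞, else Borel-Cantelli II contradicts a.s. summability
  have htop : (∑' n, μ (A n)) ≠ ⊤ := by
    intro htop
    have hone := measure_limsup_eq_one hA hiA htop
    have hae : ∀ᵐ ω ∂μ, ω ∈ limsup A atTop := by
      rw [ae_iff]
      have : {ω | ¬ ω ∈ limsup A atTop} = (limsup A atTop)ᶜ := rfl
      rw [this, measure_compl (MeasurableSet.measurableSet_limsup fun n => hA n)
        (measure_ne_top μ _), hone, measure_univ, tsub_self]
    have : ∀ᵐ ω ∂μ, False := by
      filter_upwards [hae, hc] with ω hω hsum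
      rw [Filter.mem_limsup_iff_frequently_mem] at hω
      have h0 : Tendsto (fun n => |X n ω - c n|) atTop (nhds 0) := hsum.tendsto_atTop_zero
      have hev : ∀ᶠ n in atTop, |X n ω - c n| < ε / 2 :=
        h0.eventually (eventually_lt_nhds (by linarith))
      rcases (hω.and_eventually hev).exists with ⟨n, hn1, hn2⟩
      exact absurd hn1 (not_lt.2 hn2.le)
    set_option linter.unnecessarySimpa false in
    have h0 : μ Set.univ = 0 := by rw [ae_iff] at this; simpa using this
    simp [measure_univ] at h0
  have hsum' : Summable fun n => (μ (A n)).toReal := ENNReal.summable_toReal htop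
  -- compare: 1 - levyConc μ (X n) ε ≤ (μ (A n)).toReal
  apply hdiv
  have key : ∀ n, 1 - levyConc μ (X n) ε ≤ (μ (A n)).toReal := by
    intro n
    have hcompl : (A n)ᶜ = {ω | c n - ε / 2 ≤ X n ω ∧ X n ω ≤ (c n - ε / 2) + ε} := by
      ext ω
      simp only [hA_def, Set.mem_compl_iff, Set.mem_preimage, Set.mem_setOf_eq, not_lt,
        abs_le]
      constructor <;> intro h <;> constructor <;> linarith [h.1, h.2]
    have hle : (μ (A n)ᶜ).toReal ≤ levyConc μ (X n) ε := by
      rw [hcompl]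
      refine le_ciSup_of_le ?_ (c n - ε / 2) le_rfl
      refine ⟨1, ?_⟩
      rintro x ⟨v, rfl⟩
      calc (μ _).toReal ≤ (μ Set.univ).toReal :=
            ENNReal.toReal_mono (measure_ne_top μ _) (measure_mono (Set.subset_univ _))
        _ = 1 := by simp
    have hc' : (μ (A n)ᶜ).toReal = 1 - (μ (A n)).toReal := by
      rw [measure_compl (hA n) (measure_ne_top μ _), measure_univ,
        ENNReal.toReal_sub_of_le (by simpa using prob_le_one) (by simp)]
      simp
    linarith [hle, hc'.symm.le, hc'.le]
  refine Summable.of_nonneg_of_le (fun n => ?_) key hsum'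
  -- 0 ≤ 1 - levyConc
  have : levyConc μ (X n) ε ≤ 1 := by
    refine ciSup_le fun v => ?_
    calc (μ _).toReal ≤ (μ Set.univ).toReal :=
          ENNReal.toReal_mono (measure_ne_top μ _) (measure_mono (Set.subset_univ _))
      _ = 1 := by simp
  linarith
end

section
/- For the random variables Y_k of the preceding setup (P(Y_k=0)=(k+1)^{-2}, P(Y_k=k+1)=1−(k+1)^{-2}), almost surely the function z ↦ Σ_{k=0}^∞ Y_k z^k − 1/(1−z)² defined on the open unit disk agrees with a polynomial; hence the unit circle is almost surely not a natural boundary for Σ Y_k z^k. -/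
open MeasureTheory ProbabilityTheory Filter
open scoped ENNReal NNReal

lemma aux_hasSum_pole {z : ℂ} (hz : ‖z‖ < 1) :
    HasSum (fun k : ℕ => ((k : ℂ) + 1) * z ^ k) (1 / (1 - z) ^ 2) := by
  have hz1 : (1 : ℂ) - z ≠ 0 := by
    intro h
    have : z = 1 := by linear_combination -h
    rw [this] at hz; simp at hz
  have h1 := hasSum_coe_mul_geometric_of_norm_lt_one hz
  have h2 := hasSum_geometric_of_norm_lt_one hz
  have h := h1.add h2
  have heq : z / (1 - z) ^ 2 + (1 - z)⁻¹ = 1 / (1 - z) ^ 2 := by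
    field_simp
    ring
  rw [heq] at h
  convert h using 2 with k
  · rfl
  ring

/-- For independent `Y_k` with `P(Y_k = 0) = (k+1)⁻²` and `P(Y_k = k+1) = 1 − (k+1)⁻²`,
almost surely `z ↦ ∑ Y_k z^k − 1/(1−z)²` agrees with a polynomial on the open unit disk;
hence the unit circle is almost surely not a natural boundary for `∑ Y_k z^k`. -/
theorem random_series_minus_pole_is_polynomial
    {Ω : Type*} [MeasurableSpace Ω] (μ : Measure Ω) [IsProbabilityMeasure μ]
    (Y : ℕ → Ω → ℝ) (hmeas : ∀ k, Measurable (Y k))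
    (hindep : iIndepFun Y μ)
    (h0 : ∀ k, μ {ω | Y k ω = 0} = (((k : ℝ≥0∞) + 1) ^ 2)⁻¹)
    (h1 : ∀ k, μ {ω | Y k ω = (k : ℝ) + 1} = 1 - (((k : ℝ≥0∞) + 1) ^ 2)⁻¹) :
    ∀ᵐ ω ∂μ, ∃ p : Polynomial ℂ, ∀ z : ℂ, ‖z‖ < 1 →
      (∑' k : ℕ, (Y k ω : ℂ) * z ^ k) - 1 / (1 - z) ^ 2 = p.eval z := by
  -- Step 1: Borel–Cantelli, sum of μ {Y k = 0} is finite.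
  have hsum : ∑' k : ℕ, μ {ω | Y k ω = 0} ≠ ⊤ := by
    simp only [h0]
    have key : ∀ k : ℕ, (((k : ℝ≥0∞) + 1) ^ 2)⁻¹
        = ((((((k : ℝ≥0) + 1) ^ 2)⁻¹ : ℝ≥0)) : ℝ≥0∞) := by
      intro k
      have hk : ((k : ℝ≥0) + 1) ^ 2 ≠ 0 := by positivity
      rw [ENNReal.coe_inv hk, ENNReal.coe_pow, ENNReal.coe_add, ENNReal.coe_natCast,
        ENNReal.coe_one]
    simp only [key]
    rw [ENNReal.tsum_coe_ne_top_iff_summable, ← NNReal.summable_coe]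
    have hs : Summable (fun k : ℕ => (((k : ℝ) + 1) ^ 2)⁻¹) := by
      have h2 : Summable (fun n : ℕ => ((n : ℝ) ^ 2)⁻¹) :=
        ((Real.summable_one_div_nat_pow (p := 2)).2 one_lt_two).congr
          (by intro n; simp [one_div])
      exact ((summable_nat_add_iff 1).2 h2).congr (by intro n; push_cast; ring_nf)
    exact hs.congr (by intro n; push_cast; ring_nf)
  have hBC := MeasureTheory.ae_eventually_notMem (μ := μ)
    (s := fun k => {ω | Y k ω = 0}) hsum
  -- Step 2: a.s. each Y k takes only values 0 or k+1.
  have htwo : ∀ᵐ ω ∂μ, ∀ k : ℕ, Y k ω = 0 ∨ Y k ω = (k : ℝ) + 1 := by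
    rw [ae_all_iff]
    intro k
    have hA : MeasurableSet {ω | Y k ω = 0} := (hmeas k) (measurableSet_singleton 0)
    have hB : MeasurableSet {ω | Y k ω = (k : ℝ) + 1} :=
      (hmeas k) (measurableSet_singleton _)
    have hdisj : Disjoint {ω | Y k ω = 0} {ω | Y k ω = (k : ℝ) + 1} := by
      rw [Set.disjoint_left]
      intro ω h1' h2'
      have : (0 : ℝ) = (k : ℝ) + 1 := by rw [← h1', h2']
      have hk : (0 : ℝ) < (k : ℝ) + 1 := by positivity
      linarith
    have hle : (((k : ℝ≥0∞) + 1) ^ 2)⁻¹ ≤ 1 := by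
      rw [ENNReal.inv_le_one]
      exact one_le_pow_of_one_le' (le_add_self) 2
    have hunion : μ ({ω | Y k ω = 0} ∪ {ω | Y k ω = (k : ℝ) + 1}) = 1 := by
      rw [measure_union hdisj hB, h0, h1, add_tsub_cancel_of_le hle]
    have hcompl : μ ({ω | Y k ω = 0} ∪ {ω | Y k ω = (k : ℝ) + 1})ᶜ = 0 := by
      rw [measure_compl (hA.union hB) (measure_ne_top _ _), hunion, measure_univ, tsub_self]
    filter_upwards [measure_eq_zero_iff_ae_notMem.mp hcompl] with ω hω
    simpa [Set.mem_union, not_or, -not_and, not_and_or, Classical.not_not] using hω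
  -- Combine
  filter_upwards [hBC, htwo] with ω hω1 hω2
  obtain ⟨N, hN⟩ := eventually_atTop.mp hω1
  have hYk : ∀ k ≥ N, Y k ω = (k : ℝ) + 1 := by
    intro k hk
    rcases hω2 k with h | h
    · exact absurd h (hN k hk)
    · exact h
  refine ⟨∑ k ∈ Finset.range N, Polynomial.C ((Y k ω : ℂ) - ((k : ℂ) + 1)) * Polynomial.X ^ k,
    fun z hz => ?_⟩
  have hfin : HasSum (fun k : ℕ => ((Y k ω : ℂ) - ((k : ℂ) + 1)) * z ^ k)
      (∑ k ∈ Finset.range N, ((Y k ω : ℂ) - ((k : ℂ) + 1)) * z ^ k) := by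
    apply hasSum_sum_of_ne_finset_zero
    intro k hk
    rw [Finset.mem_range, not_lt] at hk
    rw [hYk k hk]
    push_cast
    ring
  have hpole := aux_hasSum_pole hz
  have htot := hfin.add hpole
  have htot' : HasSum (fun k : ℕ => (Y k ω : ℂ) * z ^ k)
      ((∑ k ∈ Finset.range N, ((Y k ω : ℂ) - ((k : ℂ) + 1)) * z ^ k) + 1 / (1 - z) ^ 2) := by
    convert htot using 2 with k
    ring
  rw [htot'.tsum_eq, add_sub_cancel_right]
  simp [Polynomial.eval_finset_sum]
end
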